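/- Let ψ_r(t):=√2·sin((r−1/2)πt) for r=1,2,… and t∈[0,1] (the orthonormal eigenfunctions of the covariance operator of a standard Brownian motion on [0,1]). For t∈(0,1) and ε>0, let C(t,ε,[0,1]) denote the set of all continuous functions f∈L²([0,1]) with f(t)=sup_{s∈[0,1]}f(s)=1 and f(s)=0 for s∉[t−ε,t+ε]. Then for every t∈(0,1) there exists ε_t>0 such that for every 0<ε<ε_t: lim_{k→∞} inf_{f∈C(t,ε,[0,1])} sup_{s∈[0,1]} |f(s) − Σ_{r=1}^k ⟨f,ψ_r⟩ψ_r(s)| = 0, where ⟨f,ψ_r⟩=∫_0^1 f(u)ψ_r(u)du. -/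

import Mathlib

/-!
Take for `f` the raised-cosine bump `(1 + cos (π (u - t) / ε)) / 2` on `[t - ε, t + ε]`. Extending
`f|[0,1]` oddly about `0` and evenly about `1` gives a continuous `4`-periodic function whose
Fourier series is exactly `∑ ⟨f, ψ_r⟩ ψ_r`. Two integrations by parts bound its coefficients by
`π² / (ε ω²)` at frequency `ω`, so the series converges absolutely, to `f` pointwise, and by the
Weierstrass M-test uniformly on `[0,1]`.
-/

open MeasureTheory

/-- The orthonormal eigenfunctions of the covariance operator of a standard Brownian
motion on `[0,1]`: `ψ_r(t) = √2 sin((r - 1/2) π t)`, `r = 1, 2, …`. -/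
noncomputable def psiBM (r : ℕ) (t : ℝ) : ℝ :=
  Real.sqrt 2 * Real.sin (((r : ℝ) - 1 / 2) * Real.pi * t)

open Real Set Filter Function

section SineDecay

variable {φ φ' φ'' : ℝ → ℝ} {a b l : ℝ}

theorem integral_mul_sin_eq_of_hasDerivAt (hl : l ≠ 0)
    (hφ : ∀ x ∈ uIcc a b, HasDerivAt φ (φ' x) x) (hφ' : ∀ x ∈ uIcc a b, HasDerivAt φ' (φ'' x) x)
    (hφ'' : IntervalIntegrable φ'' volume a b)
    (ha : φ a = 0) (hb : φ b = 0) (ha' : φ' a = 0) (hb' : φ' b = 0) :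
    ∫ x in a..b, φ x * sin (l * x) = -(∫ x in a..b, φ'' x * sin (l * x)) / l ^ 2 := by
  have hlin : ∀ x, HasDerivAt (fun x => l * x) l x := fun x => by
    simpa using (hasDerivAt_id x).const_mul l
  have hcos : ∀ x ∈ uIcc a b, HasDerivAt (fun x => -cos (l * x) / l) (sin (l * x)) x :=
    fun x _ => (((hasDerivAt_cos _).comp x (hlin x)).neg.div_const l).congr_deriv (by field_simp)
  have hsin : ∀ x ∈ uIcc a b, HasDerivAt (fun x => sin (l * x) / l) (cos (l * x)) x :=
    fun x _ => (((hasDerivAt_sin _).comp x (hlin x)).div_const l).congr_deriv (by field_simp)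
  have hφ'int : IntervalIntegrable φ' volume a b :=
    ContinuousOn.intervalIntegrable fun x hx => (hφ' x hx).continuousAt.continuousWithinAt
  rw [intervalIntegral.integral_mul_deriv_eq_deriv_mul hφ hcos hφ'int
    ((by fun_prop : Continuous _).intervalIntegrable _ _), ha, hb]
  simp_rw [mul_div_assoc', mul_neg, neg_div, intervalIntegral.integral_neg,
    intervalIntegral.integral_div]
  rw [intervalIntegral.integral_mul_deriv_eq_deriv_mul hφ' hsin hφ''
    ((by fun_prop : Continuous _).intervalIntegrable _ _), ha', hb']
  simp_rw [mul_div_assoc', intervalIntegral.integral_div]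
  field_simp
  ring

theorem abs_integral_mul_sin_le_of_hasDerivAt {M : ℝ}
    (hφ : ∀ x ∈ uIcc a b, HasDerivAt φ (φ' x) x) (hφ' : ∀ x ∈ uIcc a b, HasDerivAt φ' (φ'' x) x)
    (hφ'' : IntervalIntegrable φ'' volume a b)
    (ha : φ a = 0) (hb : φ b = 0) (ha' : φ' a = 0) (hb' : φ' b = 0)
    (hM : ∀ x ∈ uIoc a b, |φ'' x| ≤ M) :
    |∫ x in a..b, φ x * sin (l * x)| ≤ M * |b - a| / l ^ 2 := by
  rcases eq_or_ne l 0 with rfl | hl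
  · simp
  rw [integral_mul_sin_eq_of_hasDerivAt hl hφ hφ' hφ'' ha hb ha' hb', abs_div, abs_neg,
    abs_of_pos (by positivity : 0 < l ^ 2)]
  gcongr
  rw [← Real.norm_eq_abs]
  refine intervalIntegral.norm_integral_le_of_norm_le_const fun x hx => ?_
  rw [norm_mul, Real.norm_eq_abs, Real.norm_eq_abs]
  exact (mul_le_of_le_one_right (abs_nonneg _) (abs_sin_le_one _)).trans (hM x hx)

end SineDecay

noncomputable def sinTransform (f : ℝ → ℝ) (l : ℝ) : ℝ := ∫ u, f u * sin (l * u)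

theorem sinTransform_neg (f : ℝ → ℝ) (l : ℝ) : sinTransform f (-l) = -sinTransform f l := by
  simp only [sinTransform, neg_mul, sin_neg, mul_neg, integral_neg]

section CosineBump

noncomputable def raisedCosine (t ε u : ℝ) : ℝ := (1 + cos (π / ε * (u - t))) / 2

noncomputable def cosBump (t ε u : ℝ) : ℝ := raisedCosine t ε (max (t - ε) (min (t + ε) u))

variable {t ε : ℝ}

theorem raisedCosine_sub_self (hε : 0 < ε) : raisedCosine t ε (t - ε) = 0 := by
  have : π / ε * (t - ε - t) = -π := by field_simp; ring
  rw [raisedCosine, this, cos_neg, cos_pi]; norm_num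

theorem raisedCosine_add_self (hε : 0 < ε) : raisedCosine t ε (t + ε) = 0 := by
  have : π / ε * (t + ε - t) = π := by field_simp; ring
  rw [raisedCosine, this, cos_pi]; norm_num

theorem hasDerivAt_raisedCosine (u : ℝ) :
    HasDerivAt (raisedCosine t ε) (-(π / ε) * sin (π / ε * (u - t)) / 2) u := by
  have := (((hasDerivAt_id u).sub_const t).const_mul (π / ε)).cos.const_add 1 |>.div_const 2
  exact this.congr_deriv (by simp only [id]; ring)

theorem hasDerivAt_deriv_raisedCosine (u : ℝ) :
    HasDerivAt (fun u => -(π / ε) * sin (π / ε * (u - t)) / 2)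
      (-(π / ε) ^ 2 * cos (π / ε * (u - t)) / 2) u := by
  have := ((((hasDerivAt_id u).sub_const t).const_mul (π / ε)).sin.const_mul (-(π / ε))).div_const 2
  exact this.congr_deriv (by simp only [id]; ring)

theorem cosBump_self (hε : 0 < ε) : cosBump t ε t = 1 := by
  simp [cosBump, raisedCosine, hε.le]

theorem cosBump_le_one (u : ℝ) : cosBump t ε u ≤ 1 := by
  have := cos_le_one (π / ε * (max (t - ε) (min (t + ε) u) - t))
  rw [cosBump, raisedCosine]; linarith

theorem continuous_cosBump : Continuous (cosBump t ε) := by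
  unfold cosBump raisedCosine; fun_prop

theorem cosBump_eq_raisedCosine {u : ℝ} (hu : u ∈ Icc (t - ε) (t + ε)) :
    cosBump t ε u = raisedCosine t ε u := by
  rw [cosBump, min_eq_right hu.2, max_eq_right hu.1]

theorem support_cosBump (hε : 0 < ε) : support (cosBump t ε) ⊆ Ioo (t - ε) (t + ε) := by
  intro u hu
  by_contra hu'
  rcases not_and_or.mp hu' with h | h <;> apply hu <;> rw [cosBump]
  · rw [min_eq_right (by linarith), max_eq_left (by linarith), raisedCosine_sub_self hε]
  · rw [min_eq_left (by linarith), max_eq_right (by linarith), raisedCosine_add_self hε]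

theorem abs_sinTransform_cosBump_le (hε : 0 < ε) (l : ℝ) :
    |sinTransform (cosBump t ε) l| ≤ π ^ 2 / (ε * l ^ 2) := by
  have hsupp : support (fun u => cosBump t ε u * sin (l * u)) ⊆ Ioc (t - ε) (t + ε) :=
    (support_mul_subset_left _ _).trans ((support_cosBump hε).trans Ioo_subset_Ioc_self)
  have hπ : π / ε * ε = π := div_mul_cancel₀ _ hε.ne'
  have hbound := abs_integral_mul_sin_le_of_hasDerivAt (l := l) (M := (π / ε) ^ 2 / 2)
    (fun u _ => hasDerivAt_raisedCosine (t := t) u)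
    (fun u _ => hasDerivAt_deriv_raisedCosine (t := t) u)
    ((by fun_prop : Continuous fun u => -(π / ε) ^ 2 * cos (π / ε * (u - t)) / 2).intervalIntegrable
      _ _)
    (raisedCosine_sub_self hε) (raisedCosine_add_self hε) (by simp [hπ]) (by simp [hπ])
    fun u _ => by
      rw [abs_div, abs_mul, abs_neg, abs_pow, abs_two, sq_abs]
      gcongr
      exact mul_le_of_le_one_right (sq_nonneg _) (abs_cos_le_one _)
  have hcongr : ∫ u in (t - ε)..(t + ε), cosBump t ε u * sin (l * u)
      = ∫ u in (t - ε)..(t + ε), raisedCosine t ε u * sin (l * u) :=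
    intervalIntegral.integral_congr fun u hu => by
      rw [uIcc_of_le (by linarith)] at hu
      simp only [cosBump_eq_raisedCosine hu]
  rw [sinTransform, ← intervalIntegral.integral_eq_integral_of_support_subset hsupp, hcongr]
  refine hbound.trans_eq ?_
  rw [show t + ε - (t - ε) = 2 * ε by ring, abs_of_pos (by positivity)]
  field_simp

theorem summable_abs_sinTransform_cosBump (hε : 0 < ε) :
    Summable fun n : ℤ => |sinTransform (cosBump t ε) (π * n / 2)| := by
  refine Summable.of_nonneg_of_le (fun _ => abs_nonneg _) (fun n => ?_)
    ((summable_one_div_int_pow.mpr one_lt_two).mul_left (4 / ε))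
  refine (abs_sinTransform_cosBump_le hε _).trans_eq ?_
  rcases eq_or_ne n 0 with rfl | hn
  · simp
  · field_simp
    ring

end CosineBump

section QuarterWave

variable {f : ℝ → ℝ}

theorem integrable_mul_comp_homeomorph (hf : Continuous f) (hfc : HasCompactSupport f)
    {g : ℝ → ℂ} (hg : Continuous g) (e : ℝ ≃ₜ ℝ) :
    Integrable fun x => g x * (f (e x) : ℂ) :=
  (hg.mul (Complex.continuous_ofReal.comp (hf.comp e.continuous))).integrable_of_hasCompactSupport
    (((hfc.comp_homeomorph e).comp_left Complex.ofReal_zero).mul_left (f := g))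

theorem integral_cexp_neg_sub_integral_cexp (hf : Continuous f) (hfc : HasCompactSupport f)
    (θ : ℝ) :
    (∫ x : ℝ, Complex.exp (-(θ * Complex.I) * x) * (f x : ℂ)) -
        ∫ x : ℝ, Complex.exp (θ * Complex.I * x) * (f x : ℂ) =
      -2 * Complex.I * sinTransform f θ := by
  have hint : ∀ c : ℂ, Integrable fun x : ℝ => Complex.exp (c * x) * (f x : ℂ) := fun c =>
    integrable_mul_comp_homeomorph hf hfc (by fun_prop) (Homeomorph.refl ℝ)
  rw [← integral_sub (hint _) (hint _), sinTransform, ← integral_complex_ofReal,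
    ← integral_const_mul]
  congr 1 with x
  rw [← sub_mul, show -(θ * Complex.I) * x = ((-(θ * x) : ℝ) : ℂ) * Complex.I by push_cast; ring,
    show θ * Complex.I * x = ((θ * x : ℝ) : ℂ) * Complex.I by push_cast; ring,
    Complex.exp_mul_I, Complex.exp_mul_I]
  push_cast
  simp only [Complex.cos_neg, Complex.sin_neg]
  ring

/-- On `[-2, 2]` this is the extension of `f|[0,1]` that is odd about `0` and even about `1`, so
its `4`-periodic Fourier series only contains the modes `sin ((r - 1/2) π u)`. -/
def quarterWaveExt (f : ℝ → ℝ) (u : ℝ) : ℝ := f u + f (2 - u) - f (-u) - f (u + 2)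

theorem quarterWaveExt_eq_self (hsupp : support f ⊆ Ioo 0 1) {s : ℝ} (hs : s ∈ Icc 0 1) :
    quarterWaveExt f s = f s := by
  have hzero := support_subset_iff'.mp hsupp
  rw [quarterWaveExt, hzero (2 - s) fun h => by linarith [h.2, hs.2],
    hzero (-s) fun h => by linarith [h.1, hs.1], hzero (s + 2) fun h => by linarith [h.2, hs.1]]
  ring

theorem support_quarterWaveExt (hsupp : support f ⊆ Ioo 0 1) :
    support (quarterWaveExt f) ⊆ Ioo (-2) 2 := by
  have hzero := support_subset_iff'.mp hsupp
  intro u hu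
  by_contra hu'
  apply hu
  rcases not_and_or.mp hu' with h | h <;>
  rw [quarterWaveExt, hzero u fun h' => by linarith [h'.1, h'.2],
    hzero (2 - u) fun h' => by linarith [h'.1, h'.2], hzero (-u) fun h' => by linarith [h'.1, h'.2],
    hzero (u + 2) fun h' => by linarith [h'.1, h'.2]] <;> ring

theorem integral_cexp_mul_quarterWaveExt (hf : Continuous f) (hfc : HasCompactSupport f) (c : ℂ) :
    ∫ x : ℝ, Complex.exp (c * x) * (quarterWaveExt f x : ℂ) =
      (1 - Complex.exp (-(2 * c))) * (∫ x : ℝ, Complex.exp (c * x) * (f x : ℂ)) -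
        (1 - Complex.exp (2 * c)) * ∫ x : ℝ, Complex.exp (-c * x) * (f x : ℂ) := by
  have hint : ∀ e : ℝ ≃ₜ ℝ, Integrable fun x : ℝ => Complex.exp (c * x) * (f (e x) : ℂ) :=
    integrable_mul_comp_homeomorph hf hfc (by fun_prop)
  have hint₀ : Integrable fun x : ℝ => Complex.exp (c * x) * (f x : ℂ) := hint (.refl ℝ)
  have hint₁ : Integrable fun x : ℝ => Complex.exp (c * x) * (f (2 - x) : ℂ) := hint (.subLeft 2)
  have hint₂ : Integrable fun x : ℝ => Complex.exp (c * x) * (f (-x) : ℂ) := hint (.neg ℝ)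
  have hint₃ : Integrable fun x : ℝ => Complex.exp (c * x) * (f (x + 2) : ℂ) := hint (.addRight 2)
  have hreflect : ∫ x : ℝ, Complex.exp (c * x) * (f (2 - x) : ℂ) =
      Complex.exp (2 * c) * ∫ x : ℝ, Complex.exp (-c * x) * (f x : ℂ) := by
    rw [← integral_const_mul, ← integral_sub_left_eq_self _ volume (2 : ℝ)]
    congr 1 with x
    rw [← mul_assoc, ← Complex.exp_add, sub_sub_cancel]
    push_cast; ring_nf
  have hneg : ∫ x : ℝ, Complex.exp (c * x) * (f (-x) : ℂ) =
      ∫ x : ℝ, Complex.exp (-c * x) * (f x : ℂ) := by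
    rw [← integral_neg_eq_self _ volume]
    simp only [Complex.ofReal_neg, neg_neg, neg_mul, mul_neg]
  have hshift : ∫ x : ℝ, Complex.exp (c * x) * (f (x + 2) : ℂ) =
      Complex.exp (-(2 * c)) * ∫ x : ℝ, Complex.exp (c * x) * (f x : ℂ) := by
    rw [← integral_const_mul, ← integral_add_right_eq_self
      (fun x : ℝ => Complex.exp (-(2 * c)) * (Complex.exp (c * x) * (f x : ℂ))) (2 : ℝ)]
    congr 1 with x
    rw [← mul_assoc, ← Complex.exp_add]
    push_cast; ring_nf
  simp only [quarterWaveExt, Complex.ofReal_sub, Complex.ofReal_add, mul_sub, mul_add]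
  have hint₀₁ : Integrable fun x : ℝ =>
      Complex.exp (c * x) * (f x : ℂ) + Complex.exp (c * x) * (f (2 - x) : ℂ) := hint₀.add hint₁
  have hint₀₁₂ : Integrable fun x : ℝ => Complex.exp (c * x) * (f x : ℂ) +
      Complex.exp (c * x) * (f (2 - x) : ℂ) - Complex.exp (c * x) * (f (-x) : ℂ) := hint₀₁.sub hint₂
  rw [integral_sub hint₀₁₂ hint₃, integral_sub hint₀₁ hint₂, integral_add hint₀ hint₁, hreflect,
    hneg, hshift]
  ring

instance fact_zero_lt_four : Fact ((0 : ℝ) < 4) := ⟨by norm_num⟩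

noncomputable def quarterWaveCircle (hf : Continuous f) (hsupp : support f ⊆ Ioo 0 1) :
    C(AddCircle (4 : ℝ), ℂ) :=
  ⟨AddCircle.liftIco 4 (-2) fun u => (quarterWaveExt f u : ℂ),
    AddCircle.liftIco_continuous
      (by rw [support_subset_iff'.mp (support_quarterWaveExt hsupp) _ (by simp),
        support_subset_iff'.mp (support_quarterWaveExt hsupp) _ (by norm_num)])
      (show Continuous fun u => (quarterWaveExt f u : ℂ) by
        unfold quarterWaveExt; fun_prop).continuousOn⟩

theorem quarterWaveCircle_coe (hf : Continuous f) (hsupp : support f ⊆ Ioo 0 1) {s : ℝ}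
    (hs : s ∈ Icc 0 1) : quarterWaveCircle hf hsupp s = f s := by
  rw [quarterWaveCircle, ContinuousMap.coe_mk,
    AddCircle.liftIco_coe_apply ⟨by linarith [hs.1], by linarith [hs.2]⟩,
    quarterWaveExt_eq_self hsupp hs]

theorem fourierCoeff_quarterWaveCircle (hf : Continuous f) (hsupp : support f ⊆ Ioo 0 1) (n : ℤ) :
    fourierCoeff (quarterWaveCircle hf hsupp) n =
      (1 - (-1) ^ n) * (-Complex.I / 2) * sinTransform f (π * n / 2) := by
  have hfc : HasCompactSupport f :=
    isCompact_Icc.closure_of_subset (hsupp.trans Ioo_subset_Icc_self)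
  -- `fourier (-n) x = exp (c * x)` on `AddCircle 4`
  set c : ℂ := -((π * n / 2 : ℝ) * Complex.I) with hc
  have hsupp' :
      support (fun x : ℝ => Complex.exp (c * x) * (quarterWaveExt f x : ℂ)) ⊆ Ioc (-2) 2 :=
    fun x hx => Ioo_subset_Ioc_self <| support_quarterWaveExt hsupp fun h => hx (by simp [h])
  have hexp : Complex.exp (2 * c) = (-1) ^ n ∧ Complex.exp (-(2 * c)) = (-1) ^ n := by
    rw [show 2 * c = ((-n : ℤ) : ℂ) * (π * Complex.I) by rw [hc]; push_cast; ring,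
      show -(((-n : ℤ) : ℂ) * (π * Complex.I)) = (n : ℂ) * (π * Complex.I) by push_cast; ring,
      Complex.exp_int_mul, Complex.exp_int_mul, Complex.exp_pi_mul_I, zpow_neg, ← inv_zpow,
      inv_neg_one]
    exact ⟨rfl, rfl⟩
  have hintegral : fourierCoeff (quarterWaveCircle hf hsupp) n =
      (1 / 4 : ℝ) • ∫ x : ℝ, Complex.exp (c * x) * (quarterWaveExt f x : ℂ) := by
    rw [← intervalIntegral.integral_eq_integral_of_support_subset hsupp',
      show ⇑(quarterWaveCircle hf hsupp) =
        AddCircle.liftIco 4 (-2) fun u => (quarterWaveExt f u : ℂ) from rfl, fourierCoeff_liftIco_eq, fourierCoeffOn_eq_integral]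
    norm_num only
    refine congrArg _ (intervalIntegral.integral_congr fun x _ => ?_)
    simp only [fourier_coe_apply, smul_eq_mul, hc]
    push_cast; ring_nf
  rw [hintegral, integral_cexp_mul_quarterWaveExt hf hfc, hexp.1, hexp.2, ← mul_sub, hc, neg_neg,
    integral_cexp_neg_sub_integral_cexp hf hfc, Complex.real_smul]
  push_cast
  ring

theorem summable_fourierCoeff_quarterWaveCircle (hf : Continuous f) (hsupp : support f ⊆ Ioo 0 1)
    (hJ : Summable fun n : ℤ => |sinTransform f (π * n / 2)|) :
    Summable (fourierCoeff (quarterWaveCircle hf hsupp)) := by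
  refine Summable.of_norm_bounded hJ fun n => ?_
  have hsign : ‖1 - (-1 : ℂ) ^ n‖ ≤ 2 := by
    rcases Int.even_or_odd n with h | h
    · simp [h.neg_one_zpow]
    · rw [h.neg_one_zpow]; norm_num
  rw [fourierCoeff_quarterWaveCircle, norm_mul, norm_mul, Complex.norm_real, Real.norm_eq_abs,
    norm_div, norm_neg, Complex.norm_I, Complex.norm_two]
  nlinarith [abs_nonneg (sinTransform f (π * n / 2))]

theorem fourierCoeff_quarterWaveCircle_smul_add_neg (hf : Continuous f)
    (hsupp : support f ⊆ Ioo 0 1) (n : ℕ) (x : ℝ) :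
    fourierCoeff (quarterWaveCircle hf hsupp) n • fourier (n : ℤ) (x : AddCircle (4 : ℝ)) +
        fourierCoeff (quarterWaveCircle hf hsupp) (-n) • fourier (-n : ℤ) (x : AddCircle (4 : ℝ)) =
      (((1 - (-1) ^ n) * sinTransform f (π * n / 2) * sin (π * n / 2 * x) : ℝ) : ℂ) := by
  have hodd : sinTransform f (π * ((-n : ℤ) : ℝ) / 2) = -sinTransform f (π * n / 2) := by
    rw [← sinTransform_neg]; push_cast; ring_nf
  have hsign : (-1 : ℂ) ^ (-n : ℤ) = (-1) ^ n := by
    rw [zpow_neg, ← inv_zpow, inv_neg_one, zpow_natCast]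
  rw [fourierCoeff_quarterWaveCircle, fourierCoeff_quarterWaveCircle, hodd, hsign, zpow_natCast,
    fourier_coe_apply, fourier_coe_apply,
    show 2 * (π : ℂ) * Complex.I * ((-n : ℤ) : ℂ) * x / ((4 : ℝ) : ℂ) =
      ((-(π * n / 2 * x) : ℝ) : ℂ) * Complex.I by push_cast; ring,
    show 2 * (π : ℂ) * Complex.I * ((n : ℤ) : ℂ) * x / ((4 : ℝ) : ℂ) =
      ((π * n / 2 * x : ℝ) : ℂ) * Complex.I by push_cast; ring,
    Complex.exp_mul_I, Complex.exp_mul_I, smul_eq_mul, smul_eq_mul]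
  push_cast
  simp only [Complex.cos_neg, Complex.sin_neg]
  linear_combination (-(1 - (-1 : ℂ) ^ n) * (sinTransform f (π * n / 2) : ℂ) *
    Complex.sin (π * n / 2 * x)) * Complex.I_sq

end QuarterWave

section Expansion

variable {f : ℝ → ℝ}

theorem hasSum_sinTransform_mul_sin (hf : Continuous f) (hsupp : support f ⊆ Ioo 0 1)
    (hJ : Summable fun n : ℤ => |sinTransform f (π * n / 2)|) {s : ℝ} (hs : s ∈ Icc 0 1) :
    HasSum (fun r : ℕ => 2 * sinTransform f (((r + 1 : ℕ) - 1 / 2) * π) *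
      sin (((r + 1 : ℕ) - 1 / 2) * π * s)) (f s) := by
  have hfourier := has_pointwise_sum_fourier_series_of_summable
    (summable_fourierCoeff_quarterWaveCircle hf hsupp hJ) (s : AddCircle (4 : ℝ))
  have hzero : fourierCoeff (quarterWaveCircle hf hsupp) 0 = 0 := by
    simp [fourierCoeff_quarterWaveCircle]
  have hpaired := hfourier.nat_add_neg
  simp only [fourierCoeff_quarterWaveCircle_smul_add_neg, hzero, zero_smul, add_zero,
    quarterWaveCircle_coe hf hsupp hs, Complex.hasSum_ofReal] at hpaired
  have hodd : Injective fun r : ℕ => 2 * r + 1 := fun a b h => by simpa using h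
  have heven : ∀ n ∉ range fun r : ℕ => 2 * r + 1,
      (1 - (-1) ^ n) * sinTransform f (π * n / 2) * sin (π * n / 2 * s) = 0 := fun n hn => by
    obtain ⟨k, rfl⟩ : Even n := Nat.not_odd_iff_even.mp fun ⟨r, hr⟩ => hn ⟨r, hr.symm⟩
    simp [← two_mul, pow_mul]
  convert (hodd.hasSum_iff heven).mpr hpaired using 1
  ext r
  simp only [comp_apply, pow_succ, pow_mul]
  push_cast
  ring_nf

theorem setIntegral_mul_psiBM_mul_psiBM (hsupp : support f ⊆ Ioo 0 1) (r : ℕ) (s : ℝ) :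
    (∫ u in Icc 0 1, f u * psiBM r u) * psiBM r s =
      2 * sinTransform f ((r - 1 / 2) * π) * sin ((r - 1 / 2) * π * s) := by
  have hzero : ∀ u ∉ Icc (0 : ℝ) 1, f u * psiBM r u = 0 := fun u hu => by
    rw [support_subset_iff'.mp (hsupp.trans Ioo_subset_Icc_self) u hu, zero_mul]
  have hsqrt : √2 * √2 = (2 : ℝ) := Real.mul_self_sqrt zero_le_two
  rw [setIntegral_eq_integral_of_forall_compl_eq_zero hzero]
  simp only [psiBM, mul_left_comm (f _), integral_const_mul, sinTransform]
  linear_combination (∫ u, f u * sin ((r - 1 / 2) * π * u)) * sin ((r - 1 / 2) * π * s) * hsqrt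

theorem tendstoUniformlyOn_sum_psiBM (hf : Continuous f) (hsupp : support f ⊆ Ioo 0 1)
    (hJ : Summable fun n : ℤ => |sinTransform f (π * n / 2)|) :
    TendstoUniformlyOn
      (fun k s => ∑ r ∈ Finset.Icc 1 k, (∫ u in Icc 0 1, f u * psiBM r u) * psiBM r s)
      f atTop (Icc 0 1) := by
  set term : ℕ → ℝ → ℝ := fun r s => (∫ u in Icc 0 1, f u * psiBM (r + 1) u) * psiBM (r + 1) s
  have hsum : ∀ s ∈ Icc (0 : ℝ) 1, HasSum (term · s) (f s) := fun s hs => by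
    simpa only [term, setIntegral_mul_psiBM_mul_psiBM hsupp] using
      hasSum_sinTransform_mul_sin hf hsupp hJ hs
  have hbound : ∀ r, ∀ s ∈ Icc (0 : ℝ) 1,
      ‖term r s‖ ≤ 2 * |sinTransform f (π * ((2 * r + 1 : ℕ) : ℤ) / 2)| := fun r s _ => by
    simp only [term]
    rw [Real.norm_eq_abs, setIntegral_mul_psiBM_mul_psiBM hsupp, abs_mul, abs_mul, abs_two]
    refine mul_le_of_le_one_right (by positivity) (abs_sin_le_one _) |>.trans_eq ?_
    congr 3
    push_cast; ring
  have hsummable := (hJ.comp_injective fun a b h => by simpa using h :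
    Summable fun r : ℕ => |sinTransform f (π * ((2 * r + 1 : ℕ) : ℤ) / 2)|).mul_left 2
  refine ((tendstoUniformlyOn_tsum_nat hsummable hbound).congr_right
    fun s hs => (hsum s hs).tsum_eq).congr (Eventually.of_forall fun k s _ => ?_)
  simp only [term]
  rw [Finset.range_eq_Ico,
    Finset.sum_Ico_add' (fun r => (∫ u in Icc 0 1, f u * psiBM r u) * psiBM r s),
    Finset.Ico_add_one_right_eq_Icc, zero_add]

end Expansion

/-- the Karhunen–Loève basis of the standard Brownian motion satisfies the
approximation condition (2.4) of Theorem 2: for every `t ∈ (0,1)` there is `ε_t > 0`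
such that for every `0 < ε < ε_t`,
`lim_{k→∞} inf_{f ∈ C(t,ε,[0,1])} sup_{s∈[0,1]} |f(s) - Σ_{r=1}^k ⟨f,ψ_r⟩ψ_r(s)| = 0`
(the limit being expressed in quantifier form). -/
theorem brownian_eigenfunctions_approximation :
    ∀ t ∈ Set.Ioo (0 : ℝ) 1, ∃ εt > 0, ∀ ε, 0 < ε → ε < εt →
      ∀ η > 0, ∃ K : ℕ, ∀ k ≥ K, ∃ f : ℝ → ℝ,
        (ContinuousOn f (Set.Icc (0 : ℝ) 1) ∧ f t = 1 ∧
          (∀ s ∈ Set.Icc (0 : ℝ) 1, f s ≤ 1) ∧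
          (∀ s ∈ Set.Icc (0 : ℝ) 1, s ∉ Set.Icc (t - ε) (t + ε) → f s = 0)) ∧
        (∀ s ∈ Set.Icc (0 : ℝ) 1,
          |f s - ∑ r ∈ Finset.Icc 1 k,
            (∫ u in Set.Icc (0 : ℝ) 1, f u * psiBM r u) * psiBM r s| ≤ η) := by
  rintro t ⟨ht₀, ht₁⟩
  refine ⟨min t (1 - t), lt_min ht₀ (sub_pos.mpr ht₁), fun ε hε hεt η hη => ?_⟩
  have hsupp : support (cosBump t ε) ⊆ Ioo 0 1 :=
    (support_cosBump hε).trans <| Ioo_subset_Ioo (by linarith [min_le_left t (1 - t)])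
      (by linarith [min_le_right t (1 - t)])
  have hunif := Metric.tendstoUniformlyOn_iff.mp (tendstoUniformlyOn_sum_psiBM continuous_cosBump
    hsupp (summable_abs_sinTransform_cosBump hε)) η hη
  obtain ⟨K, hK⟩ := eventually_atTop.mp hunif
  refine ⟨K, fun k hk => ⟨cosBump t ε, ⟨continuous_cosBump.continuousOn, cosBump_self hε,
    fun s _ => cosBump_le_one s, fun s _ hs => ?_⟩, fun s hs => (hK k hk s hs).le⟩⟩
  exact support_subset_iff'.mp ((support_cosBump hε).trans Ioo_subset_Icc_self) s hs
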